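/- arXiv:2201.02905 — 7 statements merged into one kernel-verified Lean document; each statement's English description precedes it below -/
import Mathlib

section
/- Let β ≥ 2 and k ≥ 1 be integers and let H be a (β,k)-HEDCS of a graph G. Then every vertex v satisfies deg_H(v) ≤ β − 1; that is, the maximum degree of H is at most β − 1. -/
open Finset

variable {V : Type*} [DecidableEq V]

/-- Degree of a vertex in an edge set. -/
def deg (E : Finset (Sym2 V)) (v : V) : ℕ := (E.filter (fun e => v ∈ e)).card

/-- Edge-degree: the sum of the degrees of the two endpoints. -/
def edeg (E : Finset (Sym2 V)) (e : Sym2 V) : ℕ :=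
  Sym2.lift ⟨fun u v => deg E u + deg E v, fun _ _ => add_comm _ _⟩ e

/-- Generalized `(β,β⁻,k)`-HEDCS of `G`: a hierarchical decomposition
`∅ = H_0 ⊆ H_1 ⊆ … ⊆ H_k = Hs` with edge-degrees in `H_i` of new edges at most `β`,
and every edge of `G` outside `Hs` has edge-degree at least `β⁻` in `Hs`. -/
def IsHEDCSgen (G Hs : Finset (Sym2 V)) (β βm k : ℕ) : Prop :=
  Hs ⊆ G ∧ ∃ H : ℕ → Finset (Sym2 V),
    H 0 = ∅ ∧ H k = Hs ∧
    (∀ i < k, H i ⊆ H (i + 1)) ∧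
    (∀ i, 1 ≤ i → i ≤ k → ∀ e ∈ H i \ H (i - 1), edeg (H i) e ≤ β) ∧
    (∀ e ∈ G \ Hs, βm ≤ edeg Hs e)

/-- `(β,k)`-HEDCS of `G`. -/
def IsHEDCS (G Hs : Finset (Sym2 V)) (β k : ℕ) : Prop :=
  IsHEDCSgen G Hs β (β - 1) k

/-- Bipartite `(β,k)`-HEDCS with vertex parts `P` and `Q`
(the base graph is `Hs` itself, so the second HEDCS condition is vacuous). -/
def IsBipartiteHEDCS (P Q : Finset V) (Hs : Finset (Sym2 V)) (β k : ℕ) : Prop :=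
  Disjoint P Q ∧
  (∀ e ∈ Hs, ∃ u v, e = s(u, v) ∧ u ∈ P ∧ v ∈ Q) ∧
  ∃ H : ℕ → Finset (Sym2 V),
    H 0 = ∅ ∧ H k = Hs ∧
    (∀ i < k, H i ⊆ H (i + 1)) ∧
    (∀ i, 1 ≤ i → i ≤ k → ∀ e ∈ H i \ H (i - 1), edeg (H i) e ≤ β)

/-- A matching: a set of pairwise vertex-disjoint (non-loop) edges. -/
def IsMatching (M : Finset (Sym2 V)) : Prop :=
  (∀ e ∈ M, ¬ e.IsDiag) ∧
  ∀ e ∈ M, ∀ f ∈ M, e ≠ f → ∀ v : V, v ∈ e → v ∉ f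

/-- The maximum matching size of the edge set `E`. -/
noncomputable def matchNum (E : Finset (Sym2 V)) : ℕ :=
  sSup {n : ℕ | ∃ M : Finset (Sym2 V), M ⊆ E ∧ IsMatching M ∧ M.card = n}

/-- Every vertex of a `(β,k)`-HEDCS has degree at most `β - 1`. -/
theorem hedcs_max_degree {V : Type*} [DecidableEq V]
    (β k : ℕ) (hβ : 2 ≤ β) (hk : 1 ≤ k)
    (G Hs : Finset (Sym2 V)) (hH : IsHEDCS G Hs β k) (v : V) :
    deg Hs v ≤ β - 1 := by
  by_contra hcon
  push_neg at hcon
  have hdeg : β ≤ deg Hs v := by omega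
  obtain ⟨-, H, h0, hkHs, hmono, hnew, -⟩ := hH
  have hexi : ∃ i, β ≤ deg (H i) v := ⟨k, by rwa [hkHs]⟩
  classical
  let i := Nat.find hexi
  have hi : β ≤ deg (H i) v := Nat.find_spec hexi
  have hik : i ≤ k := Nat.find_le (by rwa [hkHs])
  have hi1 : 1 ≤ i := by
    rcases Nat.eq_zero_or_pos i with h | h
    · exfalso
      have : deg (H 0) v = 0 := by simp [deg, h0]
      rw [← h] at this; omega
    · exact h
  have hprev : deg (H (i - 1)) v < β := by
    have := Nat.find_min hexi (m := i - 1) (by omega)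
    omega
  have hsub : H (i - 1) ⊆ H i := by
    have := hmono (i - 1) (by omega)
    rwa [Nat.sub_add_cancel hi1] at this
  -- find a new edge at v at level i
  have hfsub : (H (i - 1)).filter (fun e => v ∈ e) ⊆ (H i).filter (fun e => v ∈ e) :=
    Finset.filter_subset_filter _ hsub
  have hcard : ((H (i - 1)).filter (fun e => v ∈ e)).card <
      ((H i).filter (fun e => v ∈ e)).card := by
    simpa [deg] using lt_of_lt_of_le hprev hi
  obtain ⟨e, hei, hnotprev⟩ := Finset.exists_of_ssubset
    (lt_of_le_of_ne hfsub (fun h => absurd (congrArg Finset.card h) (by omega)))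
  rw [Finset.mem_filter] at hei
  obtain ⟨heHi, hve⟩ := hei
  have henotprev : e ∉ H (i - 1) := fun h => hnotprev (Finset.mem_filter.mpr ⟨h, hve⟩)
  have hbound := hnew i hi1 hik e (Finset.mem_sdiff.mpr ⟨heHi, henotprev⟩)
  obtain ⟨u, rfl⟩ := (Sym2.mem_iff_exists).mp hve
  have hdegu : 1 ≤ deg (H i) u := by
    apply Finset.card_pos.mpr
    exact ⟨s(v, u), Finset.mem_filter.mpr ⟨heHi, Sym2.mem_mk_right v u⟩⟩
  have : edeg (H i) s(v, u) = deg (H i) v + deg (H i) u := rfl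
  omega
end

section
/- For any integers k ≥ 1 and β ≥ 2, every finite graph G has a (β,k)-HEDCS. -/
open Finset

variable {V : Type*} [DecidableEq V]

lemma edeg_mk (E : Finset (Sym2 V)) (u v : V) : edeg E s(u, v) = deg E u + deg E v := rfl

lemma deg_insert {E : Finset (Sym2 V)} {e : Sym2 V} (he : e ∉ E) (w : V) :
    deg (insert e E) w = deg E w + (if w ∈ e then 1 else 0) := by
  unfold deg
  rw [Finset.filter_insert]
  by_cases hw : w ∈ e
  · rw [if_pos hw, Finset.card_insert_of_notMem (fun h => he (Finset.mem_of_mem_filter _ h)),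
      if_pos hw]
  · rw [if_neg hw, if_neg hw, add_zero]

def Phi (β : ℕ) (S : Finset V) (H : Finset (Sym2 V)) : ℤ :=
  (2 * β - 1) * H.card - ∑ v ∈ S, (deg H v : ℤ) ^ 2

lemma Phi_insert {β : ℕ} {S : Finset V} {H : Finset (Sym2 V)} {u v : V}
    (huv : u ≠ v) (hu : u ∈ S) (hv : v ∈ S) (he : s(u, v) ∉ H) :
    Phi β S (insert s(u, v) H) =
      Phi β S H + (2 * β - 1) - 2 * deg H u - 2 * deg H v - 2 := by
  have hsum : ∑ w ∈ S, (deg (insert s(u, v) H) w : ℤ) ^ 2 =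
      ∑ w ∈ S, ((deg H w : ℤ) ^ 2 + if w ∈ s(u, v) then 2 * (deg H w : ℤ) + 1 else 0) := by
    refine Finset.sum_congr rfl fun w _ => ?_
    rw [deg_insert he w]
    split <;> push_cast <;> ring
  have hfil : S.filter (fun w => w ∈ s(u, v)) = {u, v} := by
    ext w
    simp only [Finset.mem_filter, Sym2.mem_iff, Finset.mem_insert, Finset.mem_singleton]
    constructor
    · rintro ⟨_, h⟩; exact h
    · rintro (rfl | rfl) <;> simp [hu, hv]
  have hite : ∑ w ∈ S, (if w ∈ s(u, v) then 2 * (deg H w : ℤ) + 1 else 0) =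
      2 * (deg H u : ℤ) + 1 + (2 * (deg H v : ℤ) + 1) := by
    rw [← Finset.sum_filter, hfil, Finset.sum_pair huv]
  have hcard : (insert s(u, v) H).card = H.card + 1 := Finset.card_insert_of_notMem he
  unfold Phi
  rw [hsum, Finset.sum_add_distrib, hite, hcard]
  push_cast
  ring

omit [DecidableEq V] in
lemma sym2_exists (f : Sym2 V) : ∃ u v, f = s(u, v) :=
  f.inductionOn fun u v => ⟨u, v, rfl⟩

lemma reduce (β : ℕ) (S : Finset V) (G : Finset (Sym2 V))
    (hG : ∀ e ∈ G, ¬ e.IsDiag) (hS : ∀ e ∈ G, ∀ w ∈ e, w ∈ S) :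
    ∀ n (H : Finset (Sym2 V)), H ⊆ G → H.card ≤ n →
      ∃ H', H' ⊆ H ∧ (∀ e ∈ H', edeg H' e ≤ β) ∧ Phi β S H ≤ Phi β S H' := by
  intro n
  induction n with
  | zero =>
    intro H hHG hcard
    have : H = ∅ := Finset.card_eq_zero.mp (Nat.le_zero.mp hcard)
    subst this
    exact ⟨∅, subset_rfl, by simp, le_rfl⟩
  | succ n ih =>
    intro H hHG hcard
    by_cases hgood : ∀ e ∈ H, edeg H e ≤ β
    · exact ⟨H, subset_rfl, hgood, le_rfl⟩
    · push_neg at hgood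
      obtain ⟨f, hf, hfβ⟩ := hgood
      obtain ⟨u, v, rfl⟩ := sym2_exists f
      have huv : u ≠ v := by
        have := hG _ (hHG hf); simpa [Sym2.mk_isDiag_iff] using this
      have hu : u ∈ S := hS _ (hHG hf) u (by simp)
      have hv : v ∈ S := hS _ (hHG hf) v (by simp)
      set H' := H.erase s(u, v) with hH'
      have hins : H = insert s(u, v) H' := (Finset.insert_erase hf).symm
      have hnm : s(u, v) ∉ H' := Finset.notMem_erase _ _
      have hdegu : deg H u = deg H' u + 1 := by
        rw [hins, deg_insert hnm]; simp
      have hdegv : deg H v = deg H' v + 1 := by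
        rw [hins, deg_insert hnm]; simp
      have hPhi : Phi β S H = Phi β S H' + (2 * β - 1) - 2 * deg H' u - 2 * deg H' v - 2 := by
        rw [hins]; exact Phi_insert huv hu hv hnm
      have hstep : Phi β S H < Phi β S H' := by
        have hedeg : (β : ℤ) + 1 ≤ (deg H u : ℤ) + (deg H v : ℤ) := by
          have : β + 1 ≤ deg H u + deg H v := by
            have := hfβ; rw [edeg_mk] at this; omega
          exact_mod_cast this
        rw [hdegu, hdegv] at hedeg
        push_cast at hedeg ⊢
        rw [hPhi]
        push_cast
        linarith
      have hcard' : H'.card ≤ n := by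
        rw [hH', Finset.card_erase_of_mem hf]
        omega
      obtain ⟨H'', h1, h2, h3⟩ := ih H' ((Finset.erase_subset _ _).trans hHG) hcard'
      exact ⟨H'', h1.trans (Finset.erase_subset _ _), h2, le_of_lt (lt_of_lt_of_le hstep h3)⟩

/-- For any `k ≥ 1` and `β ≥ 2`, every finite graph `G` has a
`(β,k)`-HEDCS. -/
theorem hedcs_exists {V : Type*} [DecidableEq V]
    (β k : ℕ) (hβ : 2 ≤ β) (hk : 1 ≤ k)
    (G : Finset (Sym2 V)) (hG : ∀ e ∈ G, ¬ e.IsDiag) :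
    ∃ Hs : Finset (Sym2 V), IsHEDCS G Hs β k := by
  classical
  set S : Finset V := G.biUnion
    (fun e => Sym2.lift ⟨fun u v => ({u, v} : Finset V), fun u v => by
      ext w; simp [or_comm]⟩ e) with hSdef
  have hS : ∀ e ∈ G, ∀ w ∈ e, w ∈ S := by
    intro e he w hw
    obtain ⟨u, v, rfl⟩ := sym2_exists e
    refine Finset.mem_biUnion.mpr ⟨_, he, ?_⟩
    simpa using hw
  set T : Finset (Finset (Sym2 V)) :=
    G.powerset.filter (fun H => ∀ e ∈ H, edeg H e ≤ β) with hTdef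
  have hne : T.Nonempty := ⟨∅, by simp [hTdef]⟩
  obtain ⟨H, hHT, hmax⟩ := T.exists_max_image (Phi β S) hne
  rw [hTdef, Finset.mem_filter, Finset.mem_powerset] at hHT
  obtain ⟨hHG, hgood⟩ := hHT
  have hout : ∀ e ∈ G \ H, β - 1 ≤ edeg H e := by
    intro e he
    rw [Finset.mem_sdiff] at he
    obtain ⟨heG, heH⟩ := he
    by_contra hlt
    push_neg at hlt
    obtain ⟨u, v, rfl⟩ := sym2_exists e
    have huv : u ≠ v := by
      have := hG _ heG; simpa [Sym2.mk_isDiag_iff] using this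
    have hu : u ∈ S := hS _ heG u (by simp)
    have hv : v ∈ S := hS _ heG v (by simp)
    have hstep : Phi β S H < Phi β S (insert s(u, v) H) := by
      rw [Phi_insert huv hu hv heH]
      have : deg H u + deg H v + 2 ≤ β := by
        have := hlt; rw [edeg_mk] at this; omega
      have : (deg H u : ℤ) + (deg H v : ℤ) + 2 ≤ (β : ℤ) := by exact_mod_cast this
      push_cast
      linarith
    obtain ⟨H'', h1, h2, h3⟩ := reduce β S G hG hS (insert s(u, v) H).card
      (insert s(u, v) H) (Finset.insert_subset heG hHG) le_rfl
    have hT'' : H'' ∈ T := by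
      rw [hTdef, Finset.mem_filter, Finset.mem_powerset]
      exact ⟨h1.trans (Finset.insert_subset heG hHG), h2⟩
    have := hmax H'' hT''
    linarith
  refine ⟨H, hHG, fun i => if i = 0 then ∅ else H, by simp, by simp [Nat.one_le_iff_ne_zero.mp hk], ?_, ?_, hout⟩
  · intro i _
    dsimp only
    split <;> split <;> simp_all
  · intro i h1 h2 e he
    dsimp only at he ⊢
    rw [if_neg (by omega : ¬ i = 0)] at he ⊢
    by_cases hi : i = 1
    · exact hgood e (by simpa [hi] using he)
    · rw [if_neg (by omega)] at he
      simp at he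
end

section
/- Let k ≥ 1 and β > β⁻ ≥ 1 be integers, and let H be a bipartite (β,k)-HEDCS with vertex parts P and Q having at least β⁻·|P|/2 edges. Then |Q| ≥ (β⁻/(2(β−1)))·|P|. -/
open Finset

variable {V : Type*} [DecidableEq V]

lemma one_le_deg {V : Type*} [DecidableEq V] {E : Finset (Sym2 V)} {e : Sym2 V} {v : V}
    (he : e ∈ E) (hv : v ∈ e) : 1 ≤ deg E v := by
  rw [deg, Nat.one_le_iff_ne_zero, ← Nat.pos_iff_ne_zero, Finset.card_pos]
  exact ⟨e, Finset.mem_filter.2 ⟨he, hv⟩⟩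

lemma deg_le_hier {V : Type*} [DecidableEq V] (β k : ℕ)
    (H : ℕ → Finset (Sym2 V)) (h0 : H 0 = ∅)
    (hb : ∀ i, 1 ≤ i → i ≤ k → ∀ e ∈ H i \ H (i - 1), edeg (H i) e ≤ β) :
    ∀ i ≤ k, ∀ v : V, deg (H i) v ≤ β - 1 := by
  intro i
  induction i with
  | zero => intro _ v; simp [h0, deg]
  | succ n ih =>
    intro hik v
    by_cases hnew : ∃ e ∈ H (n+1) \ H n, v ∈ e
    · obtain ⟨e, he, hv⟩ := hnew
      obtain ⟨u, rfl⟩ : ∃ u, e = s(v, u) := ⟨Sym2.Mem.other hv, (Sym2.other_spec hv).symm⟩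
      have heH : s(v, u) ∈ H (n+1) := (Finset.mem_sdiff.1 he).1
      have hb' := hb (n+1) (Nat.le_add_left 1 n) hik _ (by simpa using he)
      have h1 : 1 ≤ deg (H (n+1)) u := one_le_deg heH (Sym2.mem_mk_right v u)
      simp only [edeg, Sym2.lift_mk] at hb'
      omega
    · push_neg at hnew
      have hsub : (H (n+1)).filter (fun e => v ∈ e) ⊆ (H n).filter (fun e => v ∈ e) := by
        intro e he'
        simp only [Finset.mem_filter] at he' ⊢
        refine ⟨?_, he'.2⟩
        by_contra h
        exact hnew e (Finset.mem_sdiff.2 ⟨he'.1, h⟩) he'.2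
      calc deg (H (n+1)) v ≤ deg (H n) v := Finset.card_le_card hsub
        _ ≤ β - 1 := ih (Nat.le_of_succ_le hik) v

/-- A bipartite `(β,k)`-HEDCS with parts `P`, `Q` and at least
`β⁻·|P|/2` edges satisfies `|Q| ≥ (β⁻/(2(β−1)))·|P|`. -/
theorem bipartite_hedcs_trivial_bound {V : Type*} [DecidableEq V]
    (β βm k : ℕ) (hk : 1 ≤ k) (hβ : βm < β) (hβm : 1 ≤ βm)
    (P Q : Finset V) (Hs : Finset (Sym2 V))
    (hH : IsBipartiteHEDCS P Q Hs β k)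
    (hcard : (βm : ℝ) * P.card / 2 ≤ (Hs.card : ℝ)) :
    (βm : ℝ) / (2 * ((β : ℝ) - 1)) * P.card ≤ (Q.card : ℝ) := by
  obtain ⟨hdisj, hbip, H, h0, hkHs, hmono, hb⟩ := hH
  have hdeg : ∀ v : V, deg Hs v ≤ β - 1 := by
    intro v
    have := deg_le_hier β k H h0 hb k le_rfl v
    rwa [hkHs] at this
  have hsubU : Hs ⊆ Q.biUnion (fun v => Hs.filter (fun e => v ∈ e)) := by
    intro e he
    obtain ⟨u, v, rfl, hu, hv⟩ := hbip e he
    exact Finset.mem_biUnion.2 ⟨v, hv, Finset.mem_filter.2 ⟨he, Sym2.mem_mk_right u v⟩⟩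
  have hnat : Hs.card ≤ (β - 1) * Q.card := by
    calc Hs.card ≤ (Q.biUnion (fun v => Hs.filter (fun e => v ∈ e))).card :=
          Finset.card_le_card hsubU
      _ ≤ ∑ v ∈ Q, (Hs.filter (fun e => v ∈ e)).card := Finset.card_biUnion_le
      _ ≤ ∑ _v ∈ Q, (β - 1) := Finset.sum_le_sum (fun v _ => hdeg v)
      _ = (β - 1) * Q.card := by rw [Finset.sum_const, smul_eq_mul, mul_comm]
  have hβ2 : 2 ≤ β := by omega
  have hcast : ((β - 1 : ℕ) : ℝ) = (β : ℝ) - 1 := by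
    rw [Nat.cast_sub (by omega)]; norm_num
  have hr : (Hs.card : ℝ) ≤ ((β : ℝ) - 1) * Q.card := by
    rw [← hcast]
    exact_mod_cast Nat.cast_le.2 hnat
  have hpos : (0 : ℝ) < 2 * ((β : ℝ) - 1) := by
    have : (2 : ℝ) ≤ (β : ℝ) := by exact_mod_cast hβ2
    nlinarith
  rw [div_mul_eq_mul_div, div_le_iff₀ hpos]
  nlinarith [hcard, hr]
end

section
/- Let k ≥ 1 and β > β⁻ ≥ 1 be integers, let G be a bipartite graph, let U be a subgraph of G, and let H be a (β,β⁻,k)-HEDCS of G \ U. Let f ≥ 0 be a real number such that every bipartite (β,k)-HEDCS with vertex parts P' and Q' having at least β⁻·|P'|/2 edges satisfies |Q'| ≥ f·|P'|. Then μ(H ∪ U) ≥ (2f/(2f+1))·μ(G). -/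
open Finset

variable {V : Type*} [DecidableEq V]

/-- endpoints of a Sym2 as a Finset -/
def ends (e : Sym2 V) : Finset V :=
  Sym2.lift ⟨fun u v => {u, v}, fun u v => by simp [Finset.pair_comm]⟩ e

@[simp] lemma ends_mk (u v : V) : ends s(u, v) = {u, v} := rfl

lemma mem_ends {v : V} {e : Sym2 V} : v ∈ ends e ↔ v ∈ e := by
  induction e using Sym2.ind with
  | _ u w => simp [Sym2.mem_iff]

lemma card_ends {e : Sym2 V} (h : ¬ e.IsDiag) : (ends e).card = 2 := by
  induction e using Sym2.ind with
  | _ u w =>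
    simp only [Sym2.isDiag_iff_proj_eq] at h
    simp [Finset.card_insert_of_notMem, h, Ne.symm h]

lemma deg_mono {E F : Finset (Sym2 V)} (h : E ⊆ F) (v : V) : deg E v ≤ deg F v :=
  Finset.card_le_card (Finset.filter_subset_filter _ h)

lemma edeg_mono {E F : Finset (Sym2 V)} (h : E ⊆ F) (e : Sym2 V) :
    edeg E e ≤ edeg F e := by
  induction e using Sym2.ind with
  | _ u w => exact Nat.add_le_add (deg_mono h u) (deg_mono h w)

lemma matchNum_bddAbove (E : Finset (Sym2 V)) :
    BddAbove {n : ℕ | ∃ M : Finset (Sym2 V), M ⊆ E ∧ IsMatching M ∧ M.card = n} := by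
  refine ⟨E.card, ?_⟩
  rintro n ⟨M, hME, _, rfl⟩
  exact Finset.card_le_card hME

lemma le_matchNum {E M : Finset (Sym2 V)} (h1 : M ⊆ E) (h2 : IsMatching M) :
    M.card ≤ matchNum E :=
  le_csSup (matchNum_bddAbove E) ⟨M, h1, h2, rfl⟩

lemma exists_max_matching (E : Finset (Sym2 V)) :
    ∃ M : Finset (Sym2 V), M ⊆ E ∧ IsMatching M ∧ M.card = matchNum E := by
  have hne : {n : ℕ | ∃ M : Finset (Sym2 V), M ⊆ E ∧ IsMatching M ∧ M.card = n}.Nonempty :=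
    ⟨0, ∅, by simp, ⟨by simp, by simp⟩, by simp⟩
  exact Nat.sSup_mem hne (matchNum_bddAbove E)

set_option maxHeartbeats 1000000 in
lemma konig_cover (A B : Finset V) (hAB : Disjoint A B)
    (E : Finset (Sym2 V)) (hbip : ∀ e ∈ E, ∃ u v, e = s(u, v) ∧ u ∈ A ∧ v ∈ B) :
    ∃ C : Finset V, (∀ e ∈ E, ∃ v, v ∈ e ∧ v ∈ C) ∧ (C.card : ℤ) ≤ (matchNum E : ℤ) := by
  classical
  -- relevant A-side vertices
  set A' : Finset V := A.filter (fun a => ∃ b ∈ B, s(a, b) ∈ E) with hA'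
  -- neighborhoods
  set Nb : V → Finset V := fun a => B.filter (fun b => s(a, b) ∈ E) with hNb
  -- maximizer of deficiency
  obtain ⟨Sm, hSmmem, hSmmax⟩ := Finset.exists_max_image A'.powerset
    (fun s => (s.card : ℤ) - ((s.biUnion Nb).card : ℤ)) ⟨A', Finset.mem_powerset_self A'⟩
  have hSmsub : Sm ⊆ A' := Finset.mem_powerset.mp hSmmem
  set d : ℤ := (Sm.card : ℤ) - ((Sm.biUnion Nb).card : ℤ) with hd
  have hd0 : 0 ≤ d := by
    have := hSmmax ∅ (by simp)
    simpa using this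
  set dn : ℕ := d.toNat with hdn
  have hdnd : (dn : ℤ) = d := Int.toNat_of_nonneg hd0
  -- the vertex cover
  refine ⟨(A' \ Sm) ∪ Sm.biUnion Nb, ?_, ?_⟩
  · -- cover property
    intro e he
    obtain ⟨u, v, rfl, huA, hvB⟩ := hbip e he
    have huA' : u ∈ A' := by
      rw [hA', Finset.mem_filter]
      exact ⟨huA, v, hvB, he⟩
    by_cases hu : u ∈ Sm
    · refine ⟨v, by simp, ?_⟩
      apply Finset.mem_union_right
      exact Finset.mem_biUnion.mpr ⟨u, hu, by rw [hNb]; exact Finset.mem_filter.mpr ⟨hvB, he⟩⟩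
    · exact ⟨u, by simp, Finset.mem_union_left _ (Finset.mem_sdiff.mpr ⟨huA', hu⟩)⟩
  · -- cardinality bound via Hall's theorem
    -- Hall setup
    set t : {a // a ∈ A'} → Finset (V ⊕ Fin dn) :=
      fun x => (Nb x.1).image Sum.inl ∪ (Finset.univ : Finset (Fin dn)).image Sum.inr with ht
    have hall : ∀ s : Finset {a // a ∈ A'}, s.card ≤ (s.biUnion t).card := by
      intro s
      rcases s.eq_empty_or_nonempty with rfl | hs
      · simp
      · have hsub : ((s.image Subtype.val).biUnion Nb).image Sum.inl ∪
            (Finset.univ : Finset (Fin dn)).image Sum.inr ⊆ s.biUnion t := by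
          intro w hw
          rcases Finset.mem_union.mp hw with hw | hw
          · obtain ⟨b, hb, rfl⟩ := Finset.mem_image.mp hw
            obtain ⟨a, ha, hab⟩ := Finset.mem_biUnion.mp hb
            obtain ⟨x, hx, rfl⟩ := Finset.mem_image.mp ha
            exact Finset.mem_biUnion.mpr ⟨x, hx,
              Finset.mem_union_left _ (Finset.mem_image_of_mem _ hab)⟩
          · obtain ⟨x, hx⟩ := hs
            exact Finset.mem_biUnion.mpr ⟨x, hx, Finset.mem_union_right _ hw⟩
        have hdisj : Disjoint (((s.image Subtype.val).biUnion Nb).image Sum.inl)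
            ((Finset.univ : Finset (Fin dn)).image Sum.inr) := by
          simp [Finset.disjoint_left]
        have hcard : (((s.image Subtype.val).biUnion Nb).image Sum.inl ∪
            (Finset.univ : Finset (Fin dn)).image Sum.inr).card
            = ((s.image Subtype.val).biUnion Nb).card + dn := by
          rw [Finset.card_union_of_disjoint hdisj,
            Finset.card_image_of_injective _ Sum.inl_injective,
            Finset.card_image_of_injective _ Sum.inr_injective, Finset.card_univ,
            Fintype.card_fin]
        have hsubA' : s.image Subtype.val ⊆ A' := by
          intro a ha
          obtain ⟨x, _, rfl⟩ := Finset.mem_image.mp ha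
          exact x.2
        have hmax := hSmmax (s.image Subtype.val) (Finset.mem_powerset.mpr hsubA')
        have hscard : s.card = (s.image Subtype.val).card :=
          (Finset.card_image_of_injective _ Subtype.val_injective).symm
        have : (s.card : ℤ) ≤ (((s.image Subtype.val).biUnion Nb).card : ℤ) + dn := by
          rw [hscard, hdnd]
          have h5 : ((s.image Subtype.val).card : ℤ)
              - (((s.image Subtype.val).biUnion Nb).card : ℤ) ≤ d := hmax
          omega
        calc s.card ≤ ((s.image Subtype.val).biUnion Nb).card + dn := by exact_mod_cast this
          _ = (((s.image Subtype.val).biUnion Nb).image Sum.inl ∪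
              (Finset.univ : Finset (Fin dn)).image Sum.inr).card := hcard.symm
          _ ≤ (s.biUnion t).card := Finset.card_le_card hsub
    obtain ⟨g, hginj, hgmem⟩ := (Finset.all_card_le_biUnion_card_iff_exists_injective t).mp hall
    -- build the matching from g
    set L : Finset {a // a ∈ A'} := Finset.univ.filter (fun x => (g x).isLeft) with hL
    set partner : {a // a ∈ A'} → V := fun x => (g x).elim id (fun _ => x.1) with hpartner
    have hpart : ∀ x ∈ L, g x = Sum.inl (partner x) := by
      intro x hx
      rw [hL, Finset.mem_filter] at hx
      obtain ⟨b, hb⟩ := Sum.isLeft_iff.mp hx.2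
      have hpb : partner x = b := by simp [hpartner, hb]
      rw [hb, hpb]
    have hpartNb : ∀ x ∈ L, partner x ∈ Nb x.1 := by
      intro x hx
      have := hgmem x
      rw [hpart x hx, ht] at this
      rcases Finset.mem_union.mp this with h | h
      · obtain ⟨b, hb, heq⟩ := Finset.mem_image.mp h
        have hbe : b = partner x := Sum.inl_injective heq
        exact hbe ▸ hb
      · exfalso
        obtain ⟨j, _, heq⟩ := Finset.mem_image.mp h
        exact absurd heq (by simp)
    have hpartB : ∀ x ∈ L, partner x ∈ B := fun x hx =>
      (Finset.mem_filter.mp (hpartNb x hx)).1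
    have hpartE : ∀ x ∈ L, s(x.1, partner x) ∈ E := fun x hx =>
      (Finset.mem_filter.mp (hpartNb x hx)).2
    have hA'A : A' ⊆ A := Finset.filter_subset _ _
    set M : Finset (Sym2 V) := L.image (fun x => s(x.1, partner x)) with hM
    have hMinj : Set.InjOn (fun x => s(x.1, partner x)) L := by
      intro x hx y hy hxy
      simp only [Sym2.eq, Sym2.rel_iff', Prod.mk.injEq, Prod.swap_prod_mk] at hxy
      rcases hxy with ⟨h1, _⟩ | ⟨h1, h2⟩
      · exact Subtype.ext h1
      · exfalso
        have : x.1 ∈ A := hA'A x.2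
        have : x.1 ∈ B := h1 ▸ hpartB y hy
        exact Finset.disjoint_left.mp hAB (hA'A x.2) this
    have hMcard : M.card = L.card := Finset.card_image_of_injOn hMinj
    have hMsub : M ⊆ E := by
      intro e he
      obtain ⟨x, hx, rfl⟩ := Finset.mem_image.mp he
      exact hpartE x hx
    have hMmatch : IsMatching M := by
      constructor
      · intro e he
        obtain ⟨x, hx, rfl⟩ := Finset.mem_image.mp he
        intro hdiag
        have h : x.1 = partner x := by simpa [Sym2.isDiag_iff_proj_eq] using hdiag
        exact Finset.disjoint_left.mp hAB (hA'A x.2) (h ▸ hpartB x hx)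
      · intro e he e' he' hne v hv hv'
        obtain ⟨x, hx, rfl⟩ := Finset.mem_image.mp he
        obtain ⟨y, hy, rfl⟩ := Finset.mem_image.mp he'
        have hxy : x ≠ y := fun h => hne (by rw [h])
        rw [Sym2.mem_iff] at hv hv'
        rcases hv with rfl | rfl <;> rcases hv' with h | h
        · exact hxy (Subtype.ext h)
        · exact Finset.disjoint_left.mp hAB (hA'A x.2) (h ▸ hpartB y hy)
        · exact Finset.disjoint_left.mp hAB (hA'A y.2) (h.symm ▸ hpartB x hx)
        · have : g x = g y := by rw [hpart x hx, hpart y hy, h]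
          exact hxy (hginj this)
    -- card bound on R
    have hRcard : ((Finset.univ : Finset {a // a ∈ A'}).filter (fun x => ¬ (g x).isLeft)).card
        ≤ dn := by
      set R := (Finset.univ : Finset {a // a ∈ A'}).filter (fun x => ¬ (g x).isLeft) with hR
      have himg : R.image g ⊆ (Finset.univ : Finset (Fin dn)).image Sum.inr := by
        intro w hw
        obtain ⟨x, hx, rfl⟩ := Finset.mem_image.mp hw
        rw [hR, Finset.mem_filter] at hx
        obtain ⟨j, hj⟩ := Sum.isRight_iff.mp (Sum.not_isLeft.mp hx.2)
        rw [hj]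
        exact Finset.mem_image_of_mem _ (Finset.mem_univ j)
      calc R.card = (R.image g).card := (Finset.card_image_of_injective _ hginj).symm
        _ ≤ ((Finset.univ : Finset (Fin dn)).image Sum.inr).card := Finset.card_le_card himg
        _ ≤ dn := by
            rw [Finset.card_image_of_injective _ Sum.inr_injective, Finset.card_univ,
              Fintype.card_fin]
    have hLcard : (A'.card : ℤ) - dn ≤ L.card := by
      have := Finset.card_filter_add_card_filter_not
        (s := (Finset.univ : Finset {a // a ∈ A'})) (p := fun x => (g x).isLeft)
      rw [Finset.card_univ, Fintype.card_coe] at this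
      rw [hL]
      omega
    -- cover card
    have hcover_card : (((A' \ Sm) ∪ Sm.biUnion Nb).card : ℤ) ≤ (A'.card : ℤ) - dn := by
      have h1 : ((A' \ Sm) ∪ Sm.biUnion Nb).card ≤ (A' \ Sm).card + (Sm.biUnion Nb).card :=
        Finset.card_union_le _ _
      have h2 : (A' \ Sm).card = A'.card - Sm.card := Finset.card_sdiff_of_subset hSmsub
      have h3 : Sm.card ≤ A'.card := Finset.card_le_card hSmsub
      rw [hdnd, hd]
      push_cast
      omega
    have hmnum : (L.card : ℤ) ≤ (matchNum E : ℤ) := by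
      exact_mod_cast hMcard ▸ le_matchNum hMsub hMmatch
    omega

set_option maxHeartbeats 2000000 in
/-- Let `G` be bipartite, `U ⊆ G`, and `H` a `(β,β⁻,k)`-HEDCS of `G \ U`.
If `f ≥ 0` is such that every bipartite `(β,k)`-HEDCS with parts `P'`, `Q'` and at least
`β⁻·|P'|/2` edges satisfies `|Q'| ≥ f·|P'|`, then `μ(H ∪ U) ≥ (2f/(2f+1))·μ(G)`. -/
theorem hedcs_gen_approx_bipartite {V : Type*} [DecidableEq V]
    (β βm k : ℕ) (hk : 1 ≤ k) (hβ : βm < β) (hβm : 1 ≤ βm)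
    (A B : Finset V) (G U Hs : Finset (Sym2 V))
    (hAB : Disjoint A B)
    (hGbip : ∀ e ∈ G, ∃ u v, e = s(u, v) ∧ u ∈ A ∧ v ∈ B)
    (hU : U ⊆ G)
    (hH : IsHEDCSgen (G \ U) Hs β βm k)
    (f : ℝ) (hf : 0 ≤ f)
    (hfprop : ∀ (P' Q' : Finset V) (H' : Finset (Sym2 V)),
      IsBipartiteHEDCS P' Q' H' β k →
      (βm : ℝ) * P'.card / 2 ≤ (H'.card : ℝ) → f * P'.card ≤ (Q'.card : ℝ)) :
    2 * f / (2 * f + 1) * (matchNum G : ℝ) ≤ (matchNum (Hs ∪ U) : ℝ) := by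
  classical
  obtain ⟨hHsub, Hh, h0, hkeq, hmonoH, hdegH, hout⟩ := hH
  have hHsG : Hs ⊆ G := hHsub.trans Finset.sdiff_subset
  have hEsub : Hs ∪ U ⊆ G := Finset.union_subset hHsG hU
  have hEbip : ∀ e ∈ Hs ∪ U, ∃ u v, e = s(u, v) ∧ u ∈ A ∧ v ∈ B :=
    fun e he => hGbip e (hEsub he)
  obtain ⟨C, hCcov, hCcard⟩ := konig_cover A B hAB (Hs ∪ U) hEbip
  obtain ⟨Ms, hMsub, hMmatch, hMcard⟩ := exists_max_matching G
  set S : Finset (Sym2 V) := Ms.filter (fun e => ∀ v ∈ e, v ∉ C) with hSdef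
  set P' : Finset V := S.biUnion ends with hP'def
  set H' : Finset (Sym2 V) := Hs.filter (fun e => ∃ v ∈ P', v ∈ e) with hH'def
  set Q' : Finset V := (H'.biUnion ends) \ P' with hQ'def
  have hSG : S ⊆ G := (Finset.filter_subset _ _).trans hMsub
  have hGnd : ∀ e ∈ G, ¬ e.IsDiag := by
    intro e he hd
    obtain ⟨u, v, rfl, huA, hvB⟩ := hGbip e he
    rw [Sym2.isDiag_iff_proj_eq] at hd
    exact Finset.disjoint_left.mp hAB huA (show (u, v).1 ∈ B from hd ▸ hvB)
  have hPnC : ∀ v ∈ P', v ∉ C := by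
    intro v hv
    obtain ⟨e, heS, hve⟩ := Finset.mem_biUnion.mp hv
    exact (Finset.mem_filter.mp heS).2 v (mem_ends.mp hve)
  have hSnot : ∀ e ∈ S, e ∉ Hs ∪ U := by
    intro e heS hmem
    obtain ⟨v, hv, hvC⟩ := hCcov e hmem
    exact (Finset.mem_filter.mp heS).2 v hv hvC
  have hSedeg : ∀ e ∈ S, βm ≤ edeg Hs e := by
    intro e heS
    refine hout e (Finset.mem_sdiff.mpr ⟨Finset.mem_sdiff.mpr ⟨hSG heS, ?_⟩, ?_⟩)
    · exact fun hc => hSnot e heS (Finset.mem_union_right _ hc)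
    · exact fun hc => hSnot e heS (Finset.mem_union_left _ hc)
  have hdisjS : ∀ x ∈ S, ∀ y ∈ S, x ≠ y → Disjoint (ends x) (ends y) := by
    intro x hx y hy hxy
    rw [Finset.disjoint_left]
    intro v hvx hvy
    exact hMmatch.2 x (Finset.filter_subset _ _ hx) y (Finset.filter_subset _ _ hy) hxy v
      (mem_ends.mp hvx) (mem_ends.mp hvy)
  have hP'card : P'.card = 2 * S.card := by
    rw [hP'def, Finset.card_biUnion hdisjS]
    rw [Finset.sum_congr rfl (fun e he => card_ends (hGnd e (hSG he)))]
    simp [mul_comm]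
  have hatmost : ∀ e ∈ Hs ∪ U, (P'.filter (fun v => v ∈ e)).card ≤ 1 := by
    intro e he
    obtain ⟨u, v, rfl, huA, hvB⟩ := hEbip e he
    obtain ⟨w, hw, hwC⟩ := hCcov _ he
    rcases Sym2.mem_iff.mp hw with rfl | rfl
    · refine Finset.card_le_one.mpr ?_
      intro a ha b hb
      simp only [Finset.mem_filter, Sym2.mem_iff] at ha hb
      have ha' : a = v := by
        rcases ha.2 with rfl | rfl
        · exact absurd hwC (hPnC a ha.1)
        · rfl
      have hb' : b = v := by
        rcases hb.2 with rfl | rfl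
        · exact absurd hwC (hPnC b hb.1)
        · rfl
      rw [ha', hb']
    · refine Finset.card_le_one.mpr ?_
      intro a ha b hb
      simp only [Finset.mem_filter, Sym2.mem_iff] at ha hb
      have ha' : a = u := by
        rcases ha.2 with rfl | rfl
        · rfl
        · exact absurd hwC (hPnC a ha.1)
      have hb' : b = u := by
        rcases hb.2 with rfl | rfl
        · rfl
        · exact absurd hwC (hPnC b hb.1)
      rw [ha', hb']
  have hdouble : ∑ v ∈ P', deg Hs v = ∑ e ∈ Hs, (P'.filter (fun v => v ∈ e)).card := by
    simp only [deg, Finset.card_filter]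
    exact Finset.sum_comm
  have hsumS : ∑ v ∈ P', deg Hs v = ∑ e ∈ S, edeg Hs e := by
    rw [hP'def, Finset.sum_biUnion (fun x hx y hy hxy => hdisjS x hx y hy hxy)]
    refine Finset.sum_congr rfl (fun e he => ?_)
    obtain ⟨u, v, rfl, huA, hvB⟩ := hGbip e (hSG he)
    have huv : u ≠ v := fun h => Finset.disjoint_left.mp hAB huA (h ▸ hvB)
    rw [ends_mk, Finset.sum_pair huv, edeg_mk]
  have hH'sub : H' ⊆ Hs := Finset.filter_subset _ _
  have hHcount : ∑ e ∈ Hs, (P'.filter (fun v => v ∈ e)).card ≤ H'.card := by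
    calc ∑ e ∈ Hs, (P'.filter (fun v => v ∈ e)).card
        ≤ ∑ e ∈ Hs, (if e ∈ H' then 1 else 0) := by
          refine Finset.sum_le_sum (fun e he => ?_)
          by_cases heH : e ∈ H'
          · simp only [heH, if_true]
            exact hatmost e (Finset.mem_union_left _ he)
          · simp only [heH, if_false, Nat.le_zero, Finset.card_eq_zero,
              Finset.filter_eq_empty_iff]
            intro v hv hve
            exact heH (Finset.mem_filter.mpr ⟨he, v, hv, hve⟩)
      _ = (Hs.filter (fun e => e ∈ H')).card := (Finset.card_filter _ _).symm
      _ = H'.card := by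
          rw [Finset.filter_mem_eq_inter, Finset.inter_eq_right.mpr hH'sub]
  have hlow : βm * S.card ≤ H'.card := by
    have h1 : S.card * βm ≤ ∑ e ∈ S, edeg Hs e := by
      simpa using Finset.card_nsmul_le_sum S _ βm hSedeg
    calc βm * S.card = S.card * βm := mul_comm _ _
      _ ≤ ∑ e ∈ S, edeg Hs e := h1
      _ = ∑ v ∈ P', deg Hs v := hsumS.symm
      _ = ∑ e ∈ Hs, (P'.filter (fun v => v ∈ e)).card := hdouble
      _ ≤ H'.card := hHcount
  -- H' is a bipartite (β,k)-HEDCS with parts P', Q'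
  have hbipHEDCS : IsBipartiteHEDCS P' Q' H' β k := by
    refine ⟨(Finset.sdiff_disjoint).symm, ?_, ?_⟩
    · intro e heH'
      obtain ⟨heHs, w, hwP, hwe⟩ := Finset.mem_filter.mp heH'
      obtain ⟨a, b, rfl, haA, hbB⟩ := hGbip e (hHsG heHs)
      have hab : a ≠ b := fun h => Finset.disjoint_left.mp hAB haA (h ▸ hbB)
      have hcard1 := hatmost _ (Finset.mem_union_left _ heHs)
      rcases Sym2.mem_iff.mp hwe with rfl | rfl
      · -- w = a ∈ P'
        have hbnP : b ∉ P' := by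
          intro hbP
          have : 1 < (P'.filter (fun v => v ∈ s(w, b))).card := by
            refine Finset.one_lt_card.mpr ⟨w, ?_, b, ?_, hab⟩
            · exact Finset.mem_filter.mpr ⟨hwP, Sym2.mem_mk_left _ _⟩
            · exact Finset.mem_filter.mpr ⟨hbP, Sym2.mem_mk_right _ _⟩
          omega
        refine ⟨w, b, rfl, hwP, ?_⟩
        rw [hQ'def]
        refine Finset.mem_sdiff.mpr ⟨?_, hbnP⟩
        exact Finset.mem_biUnion.mpr ⟨_, heH', mem_ends.mpr (Sym2.mem_mk_right _ _)⟩
      · -- w = b ∈ P'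
        have hanP : a ∉ P' := by
          intro haP
          have : 1 < (P'.filter (fun v => v ∈ s(a, w))).card := by
            refine Finset.one_lt_card.mpr ⟨a, ?_, w, ?_, hab⟩
            · exact Finset.mem_filter.mpr ⟨haP, Sym2.mem_mk_left _ _⟩
            · exact Finset.mem_filter.mpr ⟨hwP, Sym2.mem_mk_right _ _⟩
          omega
        refine ⟨w, a, Sym2.eq_swap.symm, hwP, ?_⟩
        rw [hQ'def]
        refine Finset.mem_sdiff.mpr ⟨?_, hanP⟩
        exact Finset.mem_biUnion.mpr ⟨_, heH', mem_ends.mpr (Sym2.mem_mk_left _ _)⟩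
    · refine ⟨fun i => (Hh i).filter (fun e => ∃ v ∈ P', v ∈ e), ?_, ?_, ?_, ?_⟩
      · show (Hh 0).filter _ = ∅
        rw [h0, Finset.filter_empty]
      · show (Hh k).filter _ = H'
        rw [hkeq, hH'def]
      · exact fun i hi => Finset.filter_subset_filter _ (hmonoH i hi)
      · intro i h1i hik e he
        rw [Finset.mem_sdiff, Finset.mem_filter] at he
        have heHi : e ∈ Hh i \ Hh (i - 1) := by
          rw [Finset.mem_sdiff]
          refine ⟨he.1.1, fun hc => he.2 (Finset.mem_filter.mpr ⟨hc, he.1.2⟩)⟩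
        calc edeg ((Hh i).filter (fun e => ∃ v ∈ P', v ∈ e)) e
            ≤ edeg (Hh i) e := edeg_mono (Finset.filter_subset _ _) e
          _ ≤ β := hdegH i h1i hik e heHi
  -- edge count condition
  have hedgecond : (βm : ℝ) * P'.card / 2 ≤ (H'.card : ℝ) := by
    have h1 : (βm * S.card : ℝ) ≤ (H'.card : ℝ) := by exact_mod_cast hlow
    rw [hP'card]
    push_cast
    linarith
  have hfP' : f * P'.card ≤ (Q'.card : ℝ) := hfprop P' Q' H' hbipHEDCS hedgecond
  -- Q' ⊆ C
  have hQ'C : Q' ⊆ C := by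
    intro v hv
    rw [hQ'def, Finset.mem_sdiff] at hv
    obtain ⟨hvb, hvnP⟩ := hv
    obtain ⟨e, heH', hve⟩ := Finset.mem_biUnion.mp hvb
    obtain ⟨heHs, u, huP, hue⟩ := Finset.mem_filter.mp heH'
    obtain ⟨w, hwe, hwC⟩ := hCcov e (Finset.mem_union_left _ heHs)
    have hwnP : w ∉ P' := fun hc => hPnC w hc hwC
    obtain ⟨a, b, rfl, haA, hbB⟩ := hGbip e (hHsG heHs)
    rw [mem_ends] at hve
    have hvw : v = w := by
      rcases Sym2.mem_iff.mp hue with rfl | rfl <;>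
        rcases Sym2.mem_iff.mp hve with rfl | rfl <;>
          rcases Sym2.mem_iff.mp hwe with rfl | rfl <;>
            first
            | rfl
            | exact absurd huP hvnP
            | exact absurd huP hwnP
            | (exfalso; exact hvnP huP)
            | (exfalso; exact hwnP huP)
    exact hvw ▸ hwC
  -- |Ms| ≤ |S| + |C|
  have hcount2 : Ms.card ≤ S.card + C.card := by
    set T : Finset (Sym2 V) := Ms.filter (fun e => ¬ ∀ v ∈ e, v ∉ C) with hTdef
    have hST : S.card + T.card = Ms.card :=
      Finset.card_filter_add_card_filter_not (p := fun e => ∀ v ∈ e, v ∉ C)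
    have hTC : T.card ≤ C.card := by
      have hTex : ∀ e ∈ T, ∃ v, v ∈ e ∧ v ∈ C := by
        intro e heT
        have := (Finset.mem_filter.mp heT).2
        push_neg at this
        obtain ⟨v, hv1, hv2⟩ := this
        exact ⟨v, hv1, hv2⟩
      calc T.card ≤ (C.image some).card := by
            refine Finset.card_le_card_of_injOn
              (fun e => if h : ∃ v, v ∈ e ∧ v ∈ C then some h.choose else none) ?_ ?_
            · intro e heT
              dsimp only
              rw [dif_pos (hTex e heT)]
              exact Finset.mem_image_of_mem _ (hTex e heT).choose_spec.2
            · intro e heT e' heT' heq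
              by_contra hne
              dsimp only at heq
              rw [dif_pos (hTex e heT), dif_pos (hTex e' heT')] at heq
              have hv := (hTex e heT).choose_spec
              have hv' := (hTex e' heT').choose_spec
              have hvv : (hTex e heT).choose = (hTex e' heT').choose :=
                Option.some_injective _ heq
              exact hMmatch.2 e (Finset.filter_subset _ _ heT) e'
                (Finset.filter_subset _ _ heT') hne _ hv.1 (hvv ▸ hv'.1)
        _ ≤ C.card := Finset.card_image_le
    omega
  -- final arithmetic
  have c1 : (C.card : ℝ) ≤ (matchNum (Hs ∪ U) : ℝ) := by exact_mod_cast hCcard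
  have c3 : (Q'.card : ℝ) ≤ (C.card : ℝ) := by exact_mod_cast Finset.card_le_card hQ'C
  have c4 : (matchNum G : ℝ) ≤ (S.card : ℝ) + (C.card : ℝ) := by
    rw [← hMcard]; exact_mod_cast hcount2
  have hP'r : (P'.card : ℝ) = 2 * (S.card : ℝ) := by exact_mod_cast hP'card
  have hpos : (0 : ℝ) < 2 * f + 1 := by linarith
  rw [div_mul_eq_mul_div, div_le_iff₀ hpos]
  have e2 : 2 * f * (S.card : ℝ) ≤ (matchNum (Hs ∪ U) : ℝ) := by
    rw [hP'r] at hfP'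
    linarith
  nlinarith [mul_le_mul_of_nonneg_left c4 (by linarith : (0:ℝ) ≤ 2 * f),
    mul_le_mul_of_nonneg_left c1 (by linarith : (0:ℝ) ≤ 2 * f)]
end

section
/- Let G = (V,E) be an n-vertex graph with n ≥ 2, let Δ ≥ 1 be an upper bound on the maximum degree of G, and let 0 ≤ p ≤ 1 satisfy p ≥ max{15·ln(n)/Δ, 32·ln(n)/|E|}. Let G_p be the random subgraph of G obtained by including each edge of E independently with probability p. Then Pr[μ(G_p) ≥ |E|/(8Δ)] ≥ 1 − 2/n^4. -/
open Finset

variable {V : Type*} [DecidableEq V]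

/-! If `μ(G_p) < |E|/(8Δ)`, the vertices of a maximal matching of `G_p`, padded to a set `U` of
exactly `t = ⌊|E|/(4Δ)⌋` vertices, meet every edge of `G_p`; so `G_p` misses every edge of `E`
avoiding `U`. At most `tΔ ≤ |E|/4` edges meet `U`, so for a fixed `U` this has probability at most
`(1-p)^(3|E|/4) ≤ exp(-3p|E|/4)`. A union bound over the at most `n^t` sets `U` gives
`n^t exp(-3p|E|/4) ≤ n⁻⁴`, using `t ln n ≤ p|E|/60` (from `p ≥ 15 ln n/Δ`) and `p|E| ≥ 32 ln n`. -/

section UnionBound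

variable {ι α M : Type*} [AddCommMonoid M] [PartialOrder M] [IsOrderedAddMonoid M]

theorem sum_biUnion_le_sum_sum [DecidableEq α] {f : α → M} (hf : ∀ a, 0 ≤ f a)
    (I : Finset ι) (t : ι → Finset α) :
    ∑ a ∈ I.biUnion t, f a ≤ ∑ i ∈ I, ∑ a ∈ t i, f a := by
  classical
  induction I using Finset.induction_on with
  | empty => simp
  | insert i I hi ih =>
    rw [biUnion_insert, sum_insert hi]
    calc ∑ a ∈ t i ∪ I.biUnion t, f a
        ≤ ∑ a ∈ t i ∪ I.biUnion t, f a + ∑ a ∈ t i ∩ I.biUnion t, f a :=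
          le_add_of_nonneg_right (sum_nonneg fun a _ => hf a)
      _ = ∑ a ∈ t i, f a + ∑ a ∈ I.biUnion t, f a := sum_union_inter
      _ ≤ ∑ a ∈ t i, f a + ∑ j ∈ I, ∑ a ∈ t j, f a := by gcongr

theorem sum_le_sum_sum_of_forall_exists_mem [DecidableEq α] {f : α → M} (hf : ∀ a, 0 ≤ f a)
    {s : Finset α} {I : Finset ι} {t : ι → Finset α} (h : ∀ a ∈ s, ∃ i ∈ I, a ∈ t i) :
    ∑ a ∈ s, f a ≤ ∑ i ∈ I, ∑ a ∈ t i, f a :=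
  (sum_le_sum_of_subset_of_nonneg (fun a ha => mem_biUnion.mpr (h a ha)) fun a _ _ => hf a).trans
    (sum_biUnion_le_sum_sum hf I t)

end UnionBound

section SubsetProb

variable {α : Type*} {p : ℝ}

/-- `Pr[G_p = S]`, where `G_p` keeps each element of `E` independently with probability `p`. -/
def subsetProb (p : ℝ) (E S : Finset α) : ℝ := p ^ #S * (1 - p) ^ (#E - #S)

theorem subsetProb_nonneg (hp0 : 0 ≤ p) (hp1 : p ≤ 1) (E S : Finset α) : 0 ≤ subsetProb p E S :=
  mul_nonneg (pow_nonneg hp0 _) (pow_nonneg (sub_nonneg.mpr hp1) _)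

theorem sum_subsetProb_powerset_of_subset {A E : Finset α} (hA : A ⊆ E) :
    ∑ S ∈ A.powerset, subsetProb p E S = (1 - p) ^ (#E - #A) := by
  have hsplit : ∀ S ∈ A.powerset,
      subsetProb p E S = (1 - p) ^ (#E - #A) * (p ^ #S * (1 - p) ^ (#A - #S)) := by
    intro S hS
    have hSA := card_le_card (mem_powerset.mp hS)
    have hAE := card_le_card hA
    rw [subsetProb, show #E - #S = (#E - #A) + (#A - #S) by omega, pow_add]
    ring
  rw [sum_congr rfl hsplit, ← mul_sum, sum_pow_mul_eq_add_pow, add_sub_cancel, one_pow, mul_one]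

theorem sum_subsetProb_powerset (E : Finset α) : ∑ S ∈ E.powerset, subsetProb p E S = 1 := by
  rw [sum_subsetProb_powerset_of_subset subset_rfl, Nat.sub_self, pow_zero]

theorem sum_subsetProb_filter (E : Finset α) (P : Finset α → Prop) [DecidablePred P] :
    ∑ S ∈ E.powerset with P S, subsetProb p E S
      = 1 - ∑ S ∈ E.powerset with ¬ P S, subsetProb p E S := by
  rw [eq_sub_iff_add_eq, sum_filter_add_sum_filter_not, sum_subsetProb_powerset]

theorem one_sub_pow_le_exp_neg_mul (hp1 : p ≤ 1) (k : ℕ) : (1 - p) ^ k ≤ Real.exp (-(p * k)) :=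
  calc (1 - p) ^ k ≤ Real.exp (-p) ^ k :=
        pow_le_pow_left₀ (sub_nonneg.mpr hp1) (Real.one_sub_le_exp_neg p) k
    _ = Real.exp (-(p * k)) := by rw [← Real.exp_nat_mul]; ring_nf

end SubsetProb

theorem sum_deg_eq_two_mul_card [Fintype V] {E : Finset (Sym2 V)} (hE : ∀ e ∈ E, ¬ e.IsDiag) :
    ∑ v, deg E v = 2 * #E := by
  have hcount : ∀ e ∈ E, #{v | v ∈ e} = 2 := fun e he => by
    rw [← Sym2.card_toFinset_of_not_isDiag e (hE e he)]
    congr 1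
    ext v
    simp [Sym2.mem_toFinset]
  simp only [deg, card_filter]
  rw [sum_comm, sum_congr rfl fun e he => by rw [← card_filter, hcount e he], sum_const, smul_eq_mul,
    mul_comm]

theorem card_filter_exists_mem_le_sum_deg (E : Finset (Sym2 V)) (U : Finset V) :
    #{e ∈ E | ∃ v ∈ U, v ∈ e} ≤ ∑ v ∈ U, deg E v := by
  have hunion : {e ∈ E | ∃ v ∈ U, v ∈ e} = U.biUnion fun v => {e ∈ E | v ∈ e} := by
    ext e
    simp only [mem_filter, mem_biUnion]
    tauto
  rw [hunion]
  exact card_biUnion_le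

theorem IsMatching.insert {M : Finset (Sym2 V)} (hM : IsMatching M) {e : Sym2 V}
    (he : ¬ e.IsDiag) (hfree : ∀ v ∈ e, ∀ f ∈ M, v ∉ f) : IsMatching (insert e M) := by
  refine ⟨fun f hf => ?_, fun f₁ hf₁ f₂ hf₂ hne v hv₁ hv₂ => ?_⟩
  · rcases mem_insert.mp hf with rfl | hf
    exacts [he, hM.1 f hf]
  · rcases mem_insert.mp hf₁ with rfl | hf₁ <;> rcases mem_insert.mp hf₂ with h₂ | hf₂
    · exact hne h₂.symm
    · exact hfree v hv₁ f₂ hf₂ hv₂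
    · exact hfree v (h₂ ▸ hv₂) f₁ hf₁ hv₁
    · exact hM.2 f₁ hf₁ f₂ hf₂ hne v hv₁ hv₂

omit [DecidableEq V] in
theorem card_le_matchNum {M S : Finset (Sym2 V)} (hMS : M ⊆ S) (hM : IsMatching M) :
    #M ≤ matchNum S :=
  le_csSup ⟨#S, by rintro _ ⟨M', hM'S, -, rfl⟩; exact card_le_card hM'S⟩ ⟨M, hMS, hM, rfl⟩

theorem exists_isMatching_forall_exists_mem (S : Finset (Sym2 V)) (hS : ∀ e ∈ S, ¬ e.IsDiag) :
    ∃ M ⊆ S, IsMatching M ∧ ∀ e ∈ S, ∃ v ∈ e, ∃ f ∈ M, v ∈ f := by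
  classical
  have hne : {M ∈ S.powerset | IsMatching M}.Nonempty :=
    ⟨∅, mem_filter.mpr ⟨empty_mem_powerset S, by simp [IsMatching]⟩⟩
  obtain ⟨M, hM, hmax⟩ := exists_max_image _ card hne
  obtain ⟨hMS, hMm⟩ := mem_filter.mp hM
  refine ⟨M, mem_powerset.mp hMS, hMm, fun e heS => ?_⟩
  by_contra! hfree
  have heM : e ∉ M := fun heM => hfree _ (Sym2.out_fst_mem e) e heM (Sym2.out_fst_mem e)
  have hins := hmax (insert e M) (mem_filter.mpr
    ⟨mem_powerset.mpr (insert_subset heS (mem_powerset.mp hMS)), hMm.insert (hS e heS) hfree⟩)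
  rw [card_insert_of_notMem heM] at hins
  omega

/-- The vertices of a maximal matching cover every edge. -/
theorem exists_cover_card_le_two_mul_matchNum (S : Finset (Sym2 V))
    (hS : ∀ e ∈ S, ¬ e.IsDiag) :
    ∃ U : Finset V, #U ≤ 2 * matchNum S ∧ ∀ e ∈ S, ∃ v ∈ U, v ∈ e := by
  obtain ⟨M, hMS, hM, hcover⟩ := exists_isMatching_forall_exists_mem S hS
  refine ⟨M.biUnion Sym2.toFinset, ?_, fun e he => ?_⟩
  · calc #(M.biUnion Sym2.toFinset) ≤ ∑ f ∈ M, #f.toFinset := card_biUnion_le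
      _ = 2 * #M := by
        rw [sum_congr rfl fun f hf => Sym2.card_toFinset_of_not_isDiag f (hM.1 f hf), sum_const,
          smul_eq_mul, mul_comm]
      _ ≤ 2 * matchNum S := Nat.mul_le_mul_left 2 (card_le_matchNum hMS hM)
  · obtain ⟨v, hve, f, hfM, hvf⟩ := hcover e he
    exact ⟨v, mem_biUnion.mpr ⟨f, hfM, Sym2.mem_toFinset.mpr hvf⟩, hve⟩

theorem two_mul_card_le_card_mul [Fintype V] {E : Finset (Sym2 V)} (hE : ∀ e ∈ E, ¬ e.IsDiag)
    {Δ : ℕ} (hΔ : ∀ v, deg E v ≤ Δ) : 2 * #E ≤ Fintype.card V * Δ := by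
  rw [← sum_deg_eq_two_mul_card hE, ← card_univ, ← smul_eq_mul]
  exact sum_le_card_nsmul _ _ _ fun v _ => hΔ v

theorem exists_card_eq_cover_of_two_mul_matchNum_le [Fintype V] {S : Finset (Sym2 V)}
    (hS : ∀ e ∈ S, ¬ e.IsDiag) {t : ℕ} (hμ : 2 * matchNum S ≤ t) (ht : t ≤ Fintype.card V) :
    ∃ U ∈ powersetCard t (univ : Finset V), ∀ e ∈ S, ∃ v ∈ U, v ∈ e := by
  obtain ⟨U₀, hU₀, hcover⟩ := exists_cover_card_le_two_mul_matchNum S hS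
  obtain ⟨U, hU₀U, -, hU⟩ := exists_subsuperset_card_eq (subset_univ U₀) (hU₀.trans hμ)
    (by rwa [card_univ])
  refine ⟨U, mem_powersetCard.mpr ⟨subset_univ U, hU⟩, fun e he => ?_⟩
  obtain ⟨v, hv, hve⟩ := hcover e he
  exact ⟨v, hU₀U hv, hve⟩

theorem sum_subsetProb_two_mul_matchNum_le [Fintype V] {E : Finset (Sym2 V)}
    (hE : ∀ e ∈ E, ¬ e.IsDiag) {Δ : ℕ} (hΔ : ∀ v, deg E v ≤ Δ) {p : ℝ} (hp0 : 0 ≤ p)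
    (hp1 : p ≤ 1) {t : ℕ} (ht : t ≤ Fintype.card V) :
    ∑ S ∈ E.powerset with 2 * matchNum S ≤ t, subsetProb p E S
      ≤ (Fintype.card V : ℝ) ^ t * Real.exp (-(p * (#E - t * Δ))) := by
  have hcover : ∀ S ∈ {S ∈ E.powerset | 2 * matchNum S ≤ t},
      ∃ U ∈ powersetCard t (univ : Finset V), S ∈ {e ∈ E | ∃ v ∈ U, v ∈ e}.powerset := by
    intro S hS
    obtain ⟨hSE, hμ⟩ := mem_filter.mp hS
    have hSE := mem_powerset.mp hSE
    obtain ⟨U, hU, hcov⟩ :=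
      exists_card_eq_cover_of_two_mul_matchNum_le (fun e he => hE e (hSE he)) hμ ht
    exact ⟨U, hU, mem_powerset.mpr fun e he => mem_filter.mpr ⟨hSE he, hcov e he⟩⟩
  have hmissing : ∀ U ∈ powersetCard t (univ : Finset V),
      ∑ S ∈ {e ∈ E | ∃ v ∈ U, v ∈ e}.powerset, subsetProb p E S
        ≤ Real.exp (-(p * (#E - t * Δ))) := by
    intro U hU
    have hincident : #{e ∈ E | ∃ v ∈ U, v ∈ e} ≤ t * Δ := by
      rw [← (mem_powersetCard.mp hU).2, ← smul_eq_mul]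
      exact (card_filter_exists_mem_le_sum_deg E U).trans
        (sum_le_card_nsmul _ _ _ fun v _ => hΔ v)
    rw [sum_subsetProb_powerset_of_subset (filter_subset _ _)]
    refine (one_sub_pow_le_exp_neg_mul hp1 _).trans (Real.exp_le_exp.mpr ?_)
    rw [Nat.cast_sub (card_le_card (filter_subset _ _))]
    have : (#{e ∈ E | ∃ v ∈ U, v ∈ e} : ℝ) ≤ t * Δ := by exact_mod_cast hincident
    nlinarith
  calc ∑ S ∈ E.powerset with 2 * matchNum S ≤ t, subsetProb p E S
      ≤ ∑ U ∈ powersetCard t (univ : Finset V),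
          ∑ S ∈ {e ∈ E | ∃ v ∈ U, v ∈ e}.powerset, subsetProb p E S :=
        sum_le_sum_sum_of_forall_exists_mem (subsetProb_nonneg hp0 hp1 E) hcover
    _ ≤ ∑ _U ∈ powersetCard t (univ : Finset V), Real.exp (-(p * (#E - t * Δ))) :=
        sum_le_sum hmissing
    _ ≤ (Fintype.card V : ℝ) ^ t * Real.exp (-(p * (#E - t * Δ))) := by
        rw [sum_const, nsmul_eq_mul, card_powersetCard, card_univ]
        gcongr
        exact_mod_cast Nat.choose_le_pow _ _

theorem pow_mul_exp_le_one_div {n m Δ t : ℕ} (hn : 1 ≤ n) {p : ℝ} (hp0 : 0 ≤ p)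
    (htm : t * (4 * Δ) ≤ m) (hpΔ : 15 * Real.log n ≤ p * Δ) (hpm : 32 * Real.log n ≤ p * m) :
    (n : ℝ) ^ t * Real.exp (-(p * (m - t * Δ))) ≤ 1 / (n : ℝ) ^ 4 := by
  have hpos : (0 : ℝ) < n := by exact_mod_cast hn
  have hlog : 0 ≤ Real.log n := Real.log_nonneg (by exact_mod_cast hn)
  have htm' : (t : ℝ) * (4 * Δ) ≤ m := by exact_mod_cast htm
  have htlog : t * Real.log n * 60 ≤ p * m := by nlinarith [mul_le_mul_of_nonneg_left hpΔ t.cast_nonneg]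
  have hpow : ∀ k : ℕ, (n : ℝ) ^ k = Real.exp (k * Real.log n) := fun k => by
    rw [Real.exp_nat_mul, Real.exp_log hpos]
  rw [one_div, hpow, hpow, ← Real.exp_neg, ← Real.exp_add, Real.exp_le_exp]
  push_cast
  nlinarith

theorem two_mul_le_div_of_lt_div {μ m Δ : ℕ} (hΔ : 0 < Δ) (h : (μ : ℝ) < m / (8 * Δ)) :
    2 * μ ≤ m / (4 * Δ) := by
  rw [lt_div_iff₀ (by positivity)] at h
  rw [Nat.le_div_iff_mul_le (by positivity)]
  have : μ * (8 * Δ) < m := by exact_mod_cast h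
  linarith

theorem random_subgraph_large_matching_general {V : Type*} [Fintype V] [DecidableEq V]
    (E : Finset (Sym2 V)) (hE : ∀ e ∈ E, ¬ e.IsDiag)
    (Δ : ℕ) (hΔ : ∀ v : V, deg E v ≤ Δ)
    (p : ℝ) (hp1 : p ≤ 1)
    (hp : max (15 * Real.log (Fintype.card V) / (Δ : ℝ))
              (32 * Real.log (Fintype.card V) / (E.card : ℝ)) ≤ p) :
    1 - 2 / (Fintype.card V : ℝ) ^ 4 ≤
      ∑ S ∈ E.powerset,
        (if (E.card : ℝ) / (8 * (Δ : ℝ)) ≤ (matchNum S : ℝ)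
          then p ^ S.card * (1 - p) ^ (E.card - S.card) else 0) := by
  rcases E.eq_empty_or_nonempty with rfl | ⟨e, he⟩
  · simp [div_nonneg]
  obtain ⟨v, hv⟩ : ∃ v, v ∈ e := ⟨_, Sym2.out_fst_mem e⟩
  have hn : 1 ≤ Fintype.card V := Fintype.card_pos_iff.mpr ⟨v⟩
  have hΔ0 : 0 < Δ := (card_pos.mpr ⟨e, mem_filter.mpr ⟨he, hv⟩⟩).trans_le (hΔ v)
  have hm : (0 : ℝ) < #E := by exact_mod_cast card_pos.mpr ⟨e, he⟩
  obtain ⟨hpΔ, hpm⟩ := max_le_iff.mp hp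
  rw [div_le_iff₀ (by exact_mod_cast hΔ0)] at hpΔ
  rw [div_le_iff₀ hm] at hpm
  have hp0 : 0 ≤ p := by
    nlinarith [Real.log_nonneg (show (1 : ℝ) ≤ Fintype.card V by exact_mod_cast hn)]
  set t := #E / (4 * Δ)
  have htm : t * (4 * Δ) ≤ #E := Nat.div_mul_le_self _ _
  have htn : t ≤ Fintype.card V := by
    have := two_mul_card_le_card_mul hE hΔ
    exact Nat.le_of_mul_le_mul_right (by nlinarith) hΔ0
  rw [← sum_filter]
  change _ ≤ ∑ S ∈ E.powerset with _, subsetProb p E S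
  rw [sum_subsetProb_filter]
  gcongr 1 - ?_
  calc ∑ S ∈ E.powerset with ¬ (#E : ℝ) / (8 * Δ) ≤ matchNum S, subsetProb p E S
      ≤ ∑ S ∈ E.powerset with 2 * matchNum S ≤ t, subsetProb p E S :=
        sum_le_sum_of_subset_of_nonneg (monotone_filter_right _
          fun S _ hS => two_mul_le_div_of_lt_div hΔ0 (not_le.mp hS))
          fun S _ _ => subsetProb_nonneg hp0 hp1 E S
    _ ≤ (Fintype.card V : ℝ) ^ t * Real.exp (-(p * (#E - t * Δ))) :=
        sum_subsetProb_two_mul_matchNum_le hE hΔ hp0 hp1 htn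
    _ ≤ 1 / (Fintype.card V : ℝ) ^ 4 := pow_mul_exp_le_one_div hn hp0 htm hpΔ hpm
    _ ≤ 2 / (Fintype.card V : ℝ) ^ 4 := by gcongr; norm_num

/-- For a graph `G = (V,E)` on `n ≥ 2` vertices with maximum degree at
most `Δ ≥ 1`, and `p ≥ max{15·ln n/Δ, 32·ln n/|E|}`, the random subgraph `G_p` (each edge
kept independently with probability `p`) satisfies
`Pr[μ(G_p) ≥ |E|/(8Δ)] ≥ 1 − 2/n⁴`. -/
theorem random_subgraph_large_matching {V : Type*} [Fintype V] [DecidableEq V]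
    (hn : 2 ≤ Fintype.card V)
    (E : Finset (Sym2 V)) (hE : ∀ e ∈ E, ¬ e.IsDiag)
    (Δ : ℕ) (hΔ1 : 1 ≤ Δ) (hΔ : ∀ v : V, deg E v ≤ Δ)
    (p : ℝ) (hp0 : 0 ≤ p) (hp1 : p ≤ 1)
    (hp : max (15 * Real.log (Fintype.card V) / (Δ : ℝ))
              (32 * Real.log (Fintype.card V) / (E.card : ℝ)) ≤ p) :
    1 - 2 / (Fintype.card V : ℝ) ^ 4 ≤
      ∑ S ∈ E.powerset,
        (if (E.card : ℝ) / (8 * (Δ : ℝ)) ≤ (matchNum S : ℝ)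
          then p ^ S.card * (1 - p) ^ (E.card - S.card) else 0) :=
  random_subgraph_large_matching_general E hE Δ hΔ p hp1 hp
end

section
/- Every bipartite (220,2)-HEDCS H with vertex parts P and Q having at least 217·|P|/2 edges satisfies |Q| ≥ 0.780·|P|. -/
open Finset

variable {V : Type*} [DecidableEq V]

/-! ### Auxiliary lemmas -/

lemma deg_union_aux {E F : Finset (Sym2 V)} (h : Disjoint E F) (v : V) :
    deg (E ∪ F) v = deg E v + deg F v := by
  unfold deg
  rw [Finset.filter_union, Finset.card_union_of_disjoint (Finset.disjoint_filter_filter h)]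

lemma sum_mul_deg_aux (S : Finset V) (E : Finset (Sym2 V)) (f : V → ℕ) :
    ∑ v ∈ S, f v * deg E v = ∑ e ∈ E, ∑ v ∈ S.filter (fun v => v ∈ e), f v := by
  have h1 : ∀ v, f v * deg E v = ∑ e ∈ E.filter (fun e => v ∈ e), f v := by
    intro v
    rw [Finset.sum_const, smul_eq_mul, mul_comm]
    rfl
  simp_rw [h1, Finset.sum_filter]
  rw [Finset.sum_comm]

section Bipartite

variable {P Q : Finset V} {Hs : Finset (Sym2 V)}
  (hdisj : Disjoint P Q)
  (hbip : ∀ e ∈ Hs, ∃ u v, e = s(u, v) ∧ u ∈ P ∧ v ∈ Q)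

include hdisj hbip

lemma sum_edeg_aux {E E' : Finset (Sym2 V)} (hE : E ⊆ Hs) :
    ∑ e ∈ E, edeg E' e = ∑ v ∈ P ∪ Q, deg E' v * deg E v := by
  rw [sum_mul_deg_aux]
  refine Finset.sum_congr rfl fun e he => ?_
  obtain ⟨a, b, rfl, ha, hb⟩ := hbip e (hE he)
  have hab : a ≠ b := fun h => Finset.disjoint_left.mp hdisj ha (h ▸ hb)
  have hfilter : (P ∪ Q).filter (fun v => v ∈ s(a, b)) = {a, b} := by
    ext w
    simp only [Finset.mem_filter, Finset.mem_union, Sym2.mem_iff, Finset.mem_insert,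
      Finset.mem_singleton]
    constructor
    · rintro ⟨_, h⟩; exact h
    · rintro (rfl | rfl)
      · exact ⟨Or.inl ha, Or.inl rfl⟩
      · exact ⟨Or.inr hb, Or.inr rfl⟩
  rw [hfilter, Finset.sum_pair hab]
  simp [edeg, Sym2.lift_mk]

lemma sum_deg_P_aux {E : Finset (Sym2 V)} (hE : E ⊆ Hs) :
    ∑ u ∈ P, deg E u = E.card := by
  have := sum_mul_deg_aux P E (fun _ => 1)
  simp only [one_mul] at this
  rw [this]
  rw [Finset.card_eq_sum_ones E]
  refine Finset.sum_congr rfl fun e he => ?_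
  obtain ⟨a, b, rfl, ha, hb⟩ := hbip e (hE he)
  have hfilter : P.filter (fun v => v ∈ s(a, b)) = {a} := by
    ext w
    simp only [Finset.mem_filter, Sym2.mem_iff, Finset.mem_singleton]
    constructor
    · rintro ⟨hw, (rfl | rfl)⟩
      · rfl
      · exact absurd hb (Finset.disjoint_left.mp hdisj hw)
    · rintro rfl; exact ⟨ha, Or.inl rfl⟩
  rw [hfilter, Finset.sum_singleton]

lemma sum_deg_Q_aux {E : Finset (Sym2 V)} (hE : E ⊆ Hs) :
    ∑ u ∈ Q, deg E u = E.card := by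
  have := sum_mul_deg_aux Q E (fun _ => 1)
  simp only [one_mul] at this
  rw [this]
  rw [Finset.card_eq_sum_ones E]
  refine Finset.sum_congr rfl fun e he => ?_
  obtain ⟨a, b, rfl, ha, hb⟩ := hbip e (hE he)
  have hfilter : Q.filter (fun v => v ∈ s(a, b)) = {b} := by
    ext w
    simp only [Finset.mem_filter, Sym2.mem_iff, Finset.mem_singleton]
    constructor
    · rintro ⟨hw, (rfl | rfl)⟩
      · exact absurd hw (Finset.disjoint_left.mp hdisj ha)
      · rfl
    · rintro rfl; exact ⟨hb, Or.inr rfl⟩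
  rw [hfilter, Finset.sum_singleton]

end Bipartite

set_option maxHeartbeats 1000000 in
/-- Every bipartite (220,2)-HEDCS `H` with vertex parts `P` and `Q`
having at least 217·|P|/2 edges satisfies |Q| ≥ 0.780·|P|. -/
theorem bipartite_hedcs_k2_beta220 {V : Type*} [DecidableEq V]
    (P Q : Finset V) (Hs : Finset (Sym2 V))
    (hH : IsBipartiteHEDCS P Q Hs 220 2)
    (hcard : (217 : ℝ) * P.card / 2 ≤ (Hs.card : ℝ)) :
    (0.780 : ℝ) * P.card ≤ (Q.card : ℝ) := by
  obtain ⟨hdisj, hbip, H, h0, h2, hsub, hcond⟩ := hH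
  set H1 : Finset (Sym2 V) := H 1 with hH1def
  have hH1s : H1 ⊆ Hs := by
    rw [← h2]
    exact hsub 1 (by norm_num)
  set Fs : Finset (Sym2 V) := Hs \ H1 with hFsdef
  have hFss : Fs ⊆ Hs := Finset.sdiff_subset
  have hdisjHF : Disjoint H1 Fs := Finset.disjoint_sdiff
  have hunion : H1 ∪ Fs = Hs := Finset.union_sdiff_of_subset hH1s
  -- level conditions
  have hc1 : ∀ e ∈ H1, edeg H1 e ≤ 220 := by
    intro e he
    have h01 : (1 : ℕ) - 1 = 0 := rfl
    have := hcond 1 le_rfl (by norm_num) e (by rw [h01, h0, Finset.sdiff_empty]; exact he)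
    exact this
  have hc2 : ∀ e ∈ Fs, edeg Hs e ≤ 220 := by
    intro e he
    have h21 : (2 : ℕ) - 1 = 1 := rfl
    have := hcond 2 (by norm_num) le_rfl e (by rw [h21, h2]; exact he)
    rwa [h2] at this
  -- degree additivity
  have hdegadd : ∀ v, deg Hs v = deg H1 v + deg Fs v := by
    intro v
    rw [← hunion, deg_union_aux hdisjHF]
  -- sums of edge degrees
  have hS1 : ∑ v ∈ P ∪ Q, deg H1 v * deg H1 v ≤ 220 * H1.card := by
    rw [← sum_edeg_aux hdisj hbip hH1s]
    calc ∑ e ∈ H1, edeg H1 e ≤ ∑ _e ∈ H1, 220 := Finset.sum_le_sum hc1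
      _ = 220 * H1.card := by rw [Finset.sum_const, smul_eq_mul, mul_comm]
  have hS2 : ∑ v ∈ P ∪ Q, deg Hs v * deg Fs v ≤ 220 * Fs.card := by
    rw [← sum_edeg_aux hdisj hbip hFss]
    calc ∑ e ∈ Fs, edeg Hs e ≤ ∑ _e ∈ Fs, 220 := Finset.sum_le_sum hc2
      _ = 220 * Fs.card := by rw [Finset.sum_const, smul_eq_mul, mul_comm]
  -- the weight function
  set w : V → ℕ := fun v => deg H1 v + 2 * deg Fs v with hwdef
  have hwsq : ∀ v, w v ^ 2 = deg H1 v * deg H1 v + 4 * (deg Hs v * deg Fs v) := by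
    intro v
    rw [hdegadd v]
    simp only [hwdef]
    ring
  have hWtot : ∑ v ∈ P ∪ Q, w v ^ 2 ≤ 220 * H1.card + 880 * Fs.card := by
    calc ∑ v ∈ P ∪ Q, w v ^ 2
        = (∑ v ∈ P ∪ Q, deg H1 v * deg H1 v) + 4 * ∑ v ∈ P ∪ Q, deg Hs v * deg Fs v := by
          simp_rw [hwsq, Finset.sum_add_distrib, Finset.mul_sum]
      _ ≤ 220 * H1.card + 4 * (220 * Fs.card) := by
          exact Nat.add_le_add hS1 (Nat.mul_le_mul_left 4 hS2)
      _ = 220 * H1.card + 880 * Fs.card := by ring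
  have hWsplit : ∑ v ∈ P ∪ Q, w v ^ 2 = (∑ v ∈ P, w v ^ 2) + ∑ v ∈ Q, w v ^ 2 :=
    Finset.sum_union hdisj
  -- sums of w over P and Q
  have hwP : ∑ v ∈ P, w v = H1.card + 2 * Fs.card := by
    simp only [hwdef]
    rw [Finset.sum_add_distrib, ← Finset.mul_sum, sum_deg_P_aux hdisj hbip hH1s,
      sum_deg_P_aux hdisj hbip hFss]
  have hwQ : ∑ v ∈ Q, w v = H1.card + 2 * Fs.card := by
    simp only [hwdef]
    rw [Finset.sum_add_distrib, ← Finset.mul_sum, sum_deg_Q_aux hdisj hbip hH1s,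
      sum_deg_Q_aux hdisj hbip hFss]
  have hm12 : H1.card + Fs.card = Hs.card := by
    rw [← hunion, Finset.card_union_of_disjoint hdisjHF]
  -- pass to real numbers
  set p : ℝ := (P.card : ℝ) with hpdef
  set q : ℝ := (Q.card : ℝ) with hqdef
  set m1 : ℝ := (H1.card : ℝ) with hm1def
  set m2 : ℝ := (Fs.card : ℝ) with hm2def
  set s : ℝ := m1 + 2 * m2 with hsdef
  set SP : ℝ := ((∑ v ∈ P, w v ^ 2 : ℕ) : ℝ) with hSPdef
  set SQ : ℝ := ((∑ v ∈ Q, w v ^ 2 : ℕ) : ℝ) with hSQdef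
  have hp0 : 0 ≤ p := Nat.cast_nonneg _
  have hq0 : 0 ≤ q := Nat.cast_nonneg _
  have hm10 : 0 ≤ m1 := Nat.cast_nonneg _
  have hm20 : 0 ≤ m2 := Nat.cast_nonneg _
  -- Cauchy–Schwarz on P
  have hCSP : s ^ 2 ≤ p * SP := by
    have := sq_sum_le_card_mul_sum_sq (s := P) (f := fun v => (w v : ℝ))
    have hcast1 : ∑ v ∈ P, (w v : ℝ) = s := by
      rw [hsdef, hm1def, hm2def, ← Nat.cast_sum]
      rw [hwP]
      push_cast
      ring
    have hcast2 : ∑ v ∈ P, ((w v : ℝ)) ^ 2 = SP := by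
      rw [hSPdef, Nat.cast_sum]
      push_cast
      rfl
    rwa [hcast1, hcast2] at this
  have hCSQ : s ^ 2 ≤ q * SQ := by
    have := sq_sum_le_card_mul_sum_sq (s := Q) (f := fun v => (w v : ℝ))
    have hcast1 : ∑ v ∈ Q, (w v : ℝ) = s := by
      rw [hsdef, hm1def, hm2def, ← Nat.cast_sum]
      rw [hwQ]
      push_cast
      ring
    have hcast2 : ∑ v ∈ Q, ((w v : ℝ)) ^ 2 = SQ := by
      rw [hSQdef, Nat.cast_sum]
      push_cast
      rfl
    rwa [hcast1, hcast2] at this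
  have hW : SP + SQ ≤ 220 * m1 + 880 * m2 := by
    rw [hSPdef, hSQdef, hm1def, hm2def]
    have := hWtot
    rw [hWsplit] at this
    exact_mod_cast this
  have hm : 217 * p / 2 ≤ m1 + m2 := by
    rw [hm1def, hm2def, hpdef]
    rw [← Nat.cast_add, hm12]
    exact hcard
  -- final arithmetic
  rcases eq_or_lt_of_le hp0 with hp | hp
  · rw [hpdef]
    rw [hpdef] at hp
    linarith [hq0]
  · have hs_pos : 0 < s := by
      rw [hsdef]
      linarith [hm, hp, hm20]
    have h1 : s ^ 2 * (p + q) ≤ 220 * (m1 + 4 * m2) * (p * q) := by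
      have e1 : s ^ 2 * q ≤ (p * SP) * q := mul_le_mul_of_nonneg_right hCSP hq0
      have e2 : s ^ 2 * p ≤ (q * SQ) * p := mul_le_mul_of_nonneg_right hCSQ hp0
      have e3 : (p * q) * (SP + SQ) ≤ (p * q) * (220 * m1 + 880 * m2) :=
        mul_le_mul_of_nonneg_left hW (by positivity)
      nlinarith [e1, e2, e3]
    have hK : 8580 * (m1 + 4 * m2) * p ≤ 89 * s ^ 2 := by
      have h5 : 0 ≤ p * ((m1 + m2) - 217 / 2 * p) :=
        mul_nonneg hp0 (by linarith [hm])
      nlinarith [sq_nonneg (89 * s - 12870 * p), sq_nonneg p, h5]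
    have h4 : 8580 * (m1 + 4 * m2) * p * q ≤ 89 * s ^ 2 * q :=
      mul_le_mul_of_nonneg_right hK hq0
    have h6 : 39 * p ≤ 50 * q := by
      have hs2 : 0 < s ^ 2 := by positivity
      nlinarith [h1, h4, hs2]
    linarith
end

section
/- Every bipartite (142,2)-HEDCS H with vertex parts P and Q having at least 141·|P|/2 edges satisfies |Q| ≥ 0.789·|P|. -/
/-!
Discharging over the two levels `A = H₁ ⊆ H₂ = H`. An edge `pq` (`p ∈ P`, `q ∈ Q`) gets weight
`2m - d_A(q)` if it lies in `A` and `4(m - d_H(q))` otherwise. Writing `a = d_A(v)` and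
`b = d_{H∖A}(v)`, the weight collected at `q ∈ Q` is exactly `m² - (a + 2b - m)² ≤ m²`, while the
edge-degree bounds `d_A(p) + d_A(q) ≤ β` on `A` and `d_H(p) + d_H(q) ≤ β` on `H ∖ A` make the
weight collected at `p ∈ P` at least `2β·d_H(p) - s² + (a + 2b - s)²` with `s = 3β/2 - m`.
Counting the total weight both ways gives `2β|H| ≤ m²|Q| + s²|P|`; with `β = 142`, `m = 119`,
`s = 94` and `|H| ≥ 141|P|/2` this reads `|Q| ≥ (20022 - 8836)/14161 · |P| > 0.789 |P|`.
-/

open Finset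

variable {V : Type*} [DecidableEq V]

lemma sum_eq_sum_sum_filter_mem {M : Type*} [AddCommMonoid M] {S : Finset V}
    {E : Finset (Sym2 V)} (hE : ∀ e ∈ E, #(S.filter (· ∈ e)) = 1) (f : Sym2 V → M) :
    ∑ e ∈ E, f e = ∑ v ∈ S, ∑ e ∈ E.filter (v ∈ ·), f e := by
  rw [sum_comm' (t' := E) (s' := fun e => S.filter (· ∈ e)) (fun v e => by simp only [mem_filter]; tauto)]
  refine sum_congr rfl fun e he => ?_
  rw [sum_const, hE e he, one_smul]

lemma card_eq_sum_deg {S : Finset V} {E : Finset (Sym2 V)}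
    (hE : ∀ e ∈ E, #(S.filter (· ∈ e)) = 1) : #E = ∑ v ∈ S, deg E v := by
  simpa only [deg, card_eq_sum_ones] using sum_eq_sum_sum_filter_mem hE (fun _ => 1)

section Layers

variable {A E : Finset (Sym2 V)}

lemma sum_filter_mem_eq_add_sdiff {M : Type*} [AddCommMonoid M] (hAE : A ⊆ E) (v : V)
    (f : Sym2 V → M) :
    ∑ e ∈ E.filter (v ∈ ·), f e =
      ∑ e ∈ A.filter (v ∈ ·), f e + ∑ e ∈ (E \ A).filter (v ∈ ·), f e := by
  have hsdiff : (E \ A).filter (v ∈ ·) = E.filter (v ∈ ·) \ A.filter (v ∈ ·) := by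
    ext; simp only [mem_filter, mem_sdiff]; tauto
  rw [hsdiff, add_comm, sum_sdiff (filter_subset_filter _ hAE)]

lemma deg_eq_add_deg_sdiff (hAE : A ⊆ E) (v : V) : deg E v = deg A v + deg (E \ A) v := by
  simpa only [deg, card_eq_sum_ones] using sum_filter_mem_eq_add_sdiff hAE v (fun _ => 1)

lemma sum_filter_mem_le (hAE : A ⊆ E) {v : V} {f : Sym2 V → ℝ} {c c' : ℝ}
    (hA : ∀ e ∈ A, v ∈ e → f e ≤ c) (hB : ∀ e ∈ E \ A, v ∈ e → f e ≤ c') :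
    ∑ e ∈ E.filter (v ∈ ·), f e ≤ deg A v * c + deg (E \ A) v * c' := by
  rw [sum_filter_mem_eq_add_sdiff hAE, deg, deg, ← nsmul_eq_mul, ← nsmul_eq_mul]
  gcongr <;> apply sum_le_card_nsmul <;> simp only [mem_filter, and_imp]
  exacts [hA, hB]

lemma le_sum_filter_mem (hAE : A ⊆ E) {v : V} {f : Sym2 V → ℝ} {c c' : ℝ}
    (hA : ∀ e ∈ A, v ∈ e → c ≤ f e) (hB : ∀ e ∈ E \ A, v ∈ e → c' ≤ f e) :
    deg A v * c + deg (E \ A) v * c' ≤ ∑ e ∈ E.filter (v ∈ ·), f e := by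
  rw [sum_filter_mem_eq_add_sdiff hAE, deg, deg, ← nsmul_eq_mul, ← nsmul_eq_mul]
  gcongr <;> apply card_nsmul_le_sum <;> simp only [mem_filter, and_imp]
  exacts [hA, hB]

end Layers

section Bipartite

variable {P Q : Finset V}

lemma filter_mem_mk_eq_singleton (hPQ : Disjoint P Q) {u v : V} (hu : u ∈ P) (hv : v ∈ Q) :
    P.filter (· ∈ s(u, v)) = {u} := by
  ext x
  simp only [mem_filter, Sym2.mem_iff, mem_singleton]
  constructor
  · rintro ⟨hx, rfl | rfl⟩
    · rfl
    · exact absurd hx (disjoint_right.mp hPQ hv)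
  · rintro rfl
    exact ⟨hu, Or.inl rfl⟩

variable {H : Finset (Sym2 V)}

lemma card_filter_mem_eq_one (hPQ : Disjoint P Q)
    (hH : ∀ e ∈ H, ∃ u v, e = s(u, v) ∧ u ∈ P ∧ v ∈ Q) {e : Sym2 V} (he : e ∈ H) : #(P.filter (· ∈ e)) = 1 := by
  obtain ⟨u, v, rfl, hu, hv⟩ := hH e he
  rw [filter_mem_mk_eq_singleton hPQ hu hv, card_singleton]

lemma exists_eq_mk_of_mem (hPQ : Disjoint P Q)
    (hH : ∀ e ∈ H, ∃ u v, e = s(u, v) ∧ u ∈ P ∧ v ∈ Q) {e : Sym2 V} (he : e ∈ H) {p : V} (hp : p ∈ P) (hpe : p ∈ e) :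
    ∃ q, e = s(p, q) ∧ Q.filter (· ∈ e) = {q} := by
  obtain ⟨u, v, rfl, hu, hv⟩ := hH e he
  obtain rfl : p = u := by
    rcases Sym2.mem_iff.mp hpe with rfl | rfl
    · rfl
    · exact absurd hp (disjoint_right.mp hPQ hv)
  refine ⟨v, rfl, ?_⟩
  rw [Sym2.eq_swap, filter_mem_mk_eq_singleton hPQ.symm hv hp]

end Bipartite

section Weight

variable {P Q : Finset V} {A H : Finset (Sym2 V)} {β : ℕ}

noncomputable def layerWeight (A H : Finset (Sym2 V)) (m : ℝ) (q : V) (e : Sym2 V) : ℝ :=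
  if e ∈ A then 2 * m - deg A q else 4 * (m - deg H q)

lemma sum_layerWeight_le (hAH : A ⊆ H) (m : ℝ) (q : V) :
    ∑ e ∈ H.filter (q ∈ ·), layerWeight A H m q e ≤ m ^ 2 := by
  have hsum := sum_filter_mem_le hAH (v := q) (f := layerWeight A H m q)
    (c := 2 * m - deg A q) (c' := 4 * (m - deg H q))
    (fun e he _ => by simp [layerWeight, he])
    (fun e he _ => by simp [layerWeight, (mem_sdiff.mp he).2])
  rw [deg_eq_add_deg_sdiff hAH q] at hsum
  push_cast at hsum
  nlinarith [sq_nonneg ((deg A q : ℝ) + 2 * deg (H \ A) q - m)]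

lemma le_sum_layerWeight (hPQ : Disjoint P Q)
    (hH : ∀ e ∈ H, ∃ u v, e = s(u, v) ∧ u ∈ P ∧ v ∈ Q) (hAH : A ⊆ H)
    (hA : ∀ e ∈ A, edeg A e ≤ β) (hB : ∀ e ∈ H \ A, edeg H e ≤ β) (m : ℝ) {p : V}
    (hp : p ∈ P) :
    2 * β * deg H p - (3 * β / 2 - m) ^ 2 ≤
      ∑ e ∈ H.filter (p ∈ ·), ∑ q ∈ Q.filter (· ∈ e), layerWeight A H m q e := by
  have hsum := le_sum_filter_mem hAH (v := p)
    (f := fun e => ∑ q ∈ Q.filter (· ∈ e), layerWeight A H m q e)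
    (c := 2 * m - β + deg A p) (c' := 4 * (m - β + deg H p)) ?_ ?_
  · rw [deg_eq_add_deg_sdiff hAH p] at hsum ⊢
    push_cast at hsum ⊢
    nlinarith [sq_nonneg ((deg A p : ℝ) + 2 * deg (H \ A) p - (3 * β / 2 - m))]
  · intro e he hpe
    obtain ⟨q, rfl, hQe⟩ := exists_eq_mk_of_mem hPQ hH (hAH he) hp hpe
    have hedeg : ((deg A p + deg A q : ℕ) : ℝ) ≤ β := by exact_mod_cast hA _ he
    rw [hQe, sum_singleton, layerWeight, if_pos he]
    push_cast at hedeg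
    linarith
  · intro e he hpe
    obtain ⟨q, rfl, hQe⟩ := exists_eq_mk_of_mem hPQ hH (mem_sdiff.mp he).1 hp hpe
    have hedeg : ((deg H p + deg H q : ℕ) : ℝ) ≤ β := by exact_mod_cast hB _ he
    rw [hQe, sum_singleton, layerWeight, if_neg (mem_sdiff.mp he).2]
    push_cast at hedeg
    linarith

theorem two_mul_card_le_of_layers (hPQ : Disjoint P Q)
    (hH : ∀ e ∈ H, ∃ u v, e = s(u, v) ∧ u ∈ P ∧ v ∈ Q) (hAH : A ⊆ H)
    (hA : ∀ e ∈ A, edeg A e ≤ β) (hB : ∀ e ∈ H \ A, edeg H e ≤ β) (m : ℝ) :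
    2 * β * #H ≤ m ^ 2 * #Q + (3 * β / 2 - m) ^ 2 * #P := by
  have hP : ∀ e ∈ H, #(P.filter (· ∈ e)) = 1 := fun e he => card_filter_mem_eq_one hPQ hH he
  rw [← sub_le_iff_le_add]
  calc (2 * β * #H : ℝ) - (3 * β / 2 - m) ^ 2 * #P
      = ∑ p ∈ P, (2 * β * deg H p - (3 * β / 2 - m) ^ 2) := by
        rw [card_eq_sum_deg hP, sum_sub_distrib, ← mul_sum, sum_const, nsmul_eq_mul]
        push_cast
        ring
    _ ≤ ∑ p ∈ P, ∑ e ∈ H.filter (p ∈ ·), ∑ q ∈ Q.filter (· ∈ e), layerWeight A H m q e :=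
        sum_le_sum fun p hp => le_sum_layerWeight hPQ hH hAH hA hB m hp
    _ = ∑ e ∈ H, ∑ q ∈ Q.filter (· ∈ e), layerWeight A H m q e :=
        (sum_eq_sum_sum_filter_mem hP _).symm
    _ = ∑ q ∈ Q, ∑ e ∈ H.filter (q ∈ ·), layerWeight A H m q e :=
        sum_comm' fun e q => by simp only [mem_filter]; tauto
    _ ≤ ∑ _q ∈ Q, m ^ 2 := sum_le_sum fun q _ => sum_layerWeight_le hAH m q
    _ = m ^ 2 * #Q := by rw [sum_const, nsmul_eq_mul, mul_comm]

end Weight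

lemma IsBipartiteHEDCS.exists_layers {P Q : Finset V} {H : Finset (Sym2 V)} {β : ℕ}
    (h : IsBipartiteHEDCS P Q H β 2) :
    ∃ A ⊆ H, (∀ e ∈ A, edeg A e ≤ β) ∧ ∀ e ∈ H \ A, edeg H e ≤ β := by
  obtain ⟨-, -, L, hL0, hL2, hmono, hnew⟩ := h
  refine ⟨L 1, hL2 ▸ hmono 1 one_lt_two, fun e he => ?_, fun e he => ?_⟩
  · exact hnew 1 le_rfl one_le_two e (by simpa [hL0] using he)
  · simpa [hL2] using hnew 2 one_le_two le_rfl e (by simpa [hL2] using he)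

/-- Every bipartite (142,2)-HEDCS `H` with vertex parts `P` and `Q`
having at least 141·|P|/2 edges satisfies |Q| ≥ 0.789·|P|. -/
theorem bipartite_hedcs_k2_beta142 {V : Type*} [DecidableEq V]
    (P Q : Finset V) (Hs : Finset (Sym2 V))
    (hH : IsBipartiteHEDCS P Q Hs 142 2)
    (hcard : (141 : ℝ) * P.card / 2 ≤ (Hs.card : ℝ)) :
    (0.789 : ℝ) * P.card ≤ (Q.card : ℝ) := by
  obtain ⟨A, hAH, hA, hB⟩ := hH.exists_layers
  have key := two_mul_card_le_of_layers hH.1 hH.2.1 hAH hA hB 119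
  norm_num at key
  linarith
end
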